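/- Let n ≥ 4 and let U be a tableau on [3] = {1,2,3} (so U(1) is a word on {2,3}, U(2) is a word on {1,3}, and U(3) is a word on {1,2}). There exists a regular tableau T on [n] with T_{{1,2,3}} = U if and only if: (1) U(1) and U(3) are balanced (as words on the ordered alphabets {2 ≺ 3} and {1 ≺ 2}, respectively); (2) the block sizes of U(1) are a refinement of exp_3(U(2)); and (3) the block sizes of U(3) are a refinement of exp_1(U(2)). -/

import Mathlib

noncomputable section

/-- Two words (over possibly different ordered alphabets) are order equivalent:
same length, and letters in corresponding positions compare the same way. -/
def OrdEquiv {α β : Type*} [LT α] [LT β] (u : List α) (v : List β) : Prop :=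
  ∃ h : u.length = v.length, ∀ s t : Fin u.length,
    (u.get s < u.get t ↔ v.get (Fin.cast h s) < v.get (Fin.cast h t))

/-- A regular sequence on `[n] = {1, …, n}`: a word on `[n]` (with `n ≥ 3`) whose
restrictions to any two 2-element subsets of `[n]` are order equivalent. -/
def IsRegularSeq (n : ℕ) (w : List ℕ) : Prop :=
  3 ≤ n ∧ (∀ x ∈ w, x ∈ Finset.Icc 1 n) ∧
    ∀ X Y : Finset ℕ, X ⊆ Finset.Icc 1 n → Y ⊆ Finset.Icc 1 n → X.card = 2 → Y.card = 2 →
      OrdEquiv (w.filter (· ∈ X)) (w.filter (· ∈ Y))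

/-- Balanced words on the two-letter ordered alphabet `{a ≺ b}`: concatenations of
balanced blocks `a^r b^r` and `b^r a^r` with `r ≥ 1`. -/
inductive BalancedOn {α : Type*} (a b : α) : List α → Prop
  | nil : BalancedOn a b []
  | lo (r : ℕ) (w : List α) (hr : 0 < r) (hw : BalancedOn a b w) :
      BalancedOn a b (List.replicate r a ++ List.replicate r b ++ w)
  | hi (r : ℕ) (w : List α) (hr : 0 < r) (hw : BalancedOn a b w) :
      BalancedOn a b (List.replicate r b ++ List.replicate r a ++ w)

/-- `HasBlockSizes a b w s`: the word `w` factors into balanced blocks on `{a ≺ b}`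
whose sizes are given, in order, by the list `s`. -/
inductive HasBlockSizes {α : Type*} (a b : α) : List α → List ℕ → Prop
  | nil : HasBlockSizes a b [] []
  | lo (r : ℕ) (w : List α) (s : List ℕ) (hr : 0 < r) (hw : HasBlockSizes a b w s) :
      HasBlockSizes a b (List.replicate r a ++ List.replicate r b ++ w) (r :: s)
  | hi (r : ℕ) (w : List α) (s : List ℕ) (hr : 0 < r) (hw : HasBlockSizes a b w s) :
      HasBlockSizes a b (List.replicate r b ++ List.replicate r a ++ w) (r :: s)

/-- The exponent sequence of the letter `u` in a word: the list of lengths of the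
maximal runs of consecutive `u`'s. -/
def expSeq {α : Type*} [DecidableEq α] (u : α) : List α → List ℕ
  | [] => []
  | x :: xs =>
      let s := expSeq u xs
      if x = u then
        match xs with
        | [] => [1]
        | y :: _ => if y = u then (s.headD 0 + 1) :: s.tail else 1 :: s
      else s

/-- `Refines s t`: the sequence `s` is a refinement of `t`, i.e. `s` splits into
consecutive nonempty groups whose sums are the entries of `t`. -/
inductive Refines : List ℕ → List ℕ → Prop
  | nil : Refines [] []
  | cons (g s t : List ℕ) (hg : g ≠ []) (h : Refines s t) :
      Refines (g ++ s) (g.sum :: t)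

/-- `IsOccPos w u i p`: the (1-based) position of the `i`-th occurrence of the letter
`u` in `w` is `p` (that is, `|w(u,i)| = p`). -/
def IsOccPos {α : Type*} [DecidableEq α] (w : List α) (u : α) (i p : ℕ) : Prop :=
  1 ≤ p ∧ p ≤ w.length ∧ w.getD (p - 1) u = u ∧ (w.take p).count u = i

/-- A tableau on the finite set `A ⊂ ℕ`: a family of rows, where the row of `i ∈ A`
is a word on `A \ {i}`, and rows of indices outside `A` are empty. -/
def IsTableau (A : Finset ℕ) (T : ℕ → List ℕ) : Prop :=
  (∀ i ∈ A, ∀ x ∈ T i, x ∈ A ∧ x ≠ i) ∧ ∀ i, i ∉ A → T i = []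

/-- The restriction of a tableau to `X`: keep only the rows indexed by `X` and in each
of them only the letters belonging to `X`. -/
def restrictTab (X : Finset ℕ) (T : ℕ → List ℕ) : ℕ → List ℕ :=
  fun i => if i ∈ X then (T i).filter (· ∈ X) else []

/-- The (1-based) rank of `a` in the finite set `A`. -/
def rankIn (A : Finset ℕ) (a : ℕ) : ℕ := (A.filter (· ≤ a)).card

/-- Order equivalence of a tableau on `X` with a tableau on `Y`: they have the same
normal form after replacing every letter by its rank, rows being matched according to
the increasing enumerations of `X` and `Y`. -/
def TabEquiv (X Y : Finset ℕ) (T U : ℕ → List ℕ) : Prop :=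
  X.card = Y.card ∧ ∀ j < X.card,
    ((T ((Finset.sort X (· ≤ ·)).getD j 0)).map (rankIn X)) =
    ((U ((Finset.sort Y (· ≤ ·)).getD j 0)).map (rankIn Y))

/-- A regular tableau on `A`: `|A| ≥ 4` and all restrictions to 3-element subsets are
order equivalent. -/
def IsRegularTableau (A : Finset ℕ) (T : ℕ → List ℕ) : Prop :=
  IsTableau A T ∧ 4 ≤ A.card ∧
    ∀ X Y : Finset ℕ, X ⊆ A → Y ⊆ A → X.card = 3 → Y.card = 3 →
      TabEquiv X Y (restrictTab X T) (restrictTab Y T)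

/-- A tableau on `A` is pangrammatic if every element of `A` occurs in some row. -/
def Pangrammatic (A : Finset ℕ) (T : ℕ → List ℕ) : Prop :=
  ∀ a ∈ A, ∃ i ∈ A, a ∈ T i

/-! ### Balanced blocks on the four-letter alphabet `a ≺ b ≺ c ≺ d`, encoded as
`0 ≺ 1 ≺ 2 ≺ 3` in `Fin 4`. -/

/-- A (formal) balanced block on the alphabet `{a ≺ b ≺ c ≺ d}`. -/
inductive Blk : Type
  | ab (r : ℕ) | ba (r : ℕ) | cd (r : ℕ) | dc (r : ℕ)
deriving DecidableEq

/-- The size parameter of a block. -/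
def Blk.r : Blk → ℕ
  | .ab r => r | .ba r => r | .cd r => r | .dc r => r

/-- Whether a block is on the letters `{c, d}`. -/
def Blk.isCD : Blk → Prop
  | .cd _ => True | .dc _ => True | _ => False

/-- The word of a block: `a^r b^r`, `b^r a^r`, `c^r d^r` or `d^r c^r`. -/
def Blk.word : Blk → List (Fin 4)
  | .ab r => List.replicate r 0 ++ List.replicate r 1
  | .ba r => List.replicate r 1 ++ List.replicate r 0
  | .cd r => List.replicate r 2 ++ List.replicate r 3
  | .dc r => List.replicate r 3 ++ List.replicate r 2

/-- All blocks in the list have size at least 1. -/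
def GoodList (L : List Blk) : Prop := ∀ b ∈ L, 0 < b.r

/-- The word obtained by concatenating the words of the blocks in `L`. -/
def wordOf (L : List Blk) : List (Fin 4) := (L.map Blk.word).flatten

/-- The language `B*_(ab,cd)` of concatenations of balanced blocks. -/
def InBStar (w : List (Fin 4)) : Prop := ∃ L : List Blk, GoodList L ∧ wordOf L = w

/-- The language `W_(ab,cd)`: words of `B*_(ab,cd)` containing a letter from `{a,b}`
and a letter from `{c,d}`. -/
def InW (w : List (Fin 4)) : Prop :=
  InBStar w ∧ (∃ x ∈ w, x = (0 : Fin 4) ∨ x = (1 : Fin 4)) ∧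
    (∃ x ∈ w, x = (2 : Fin 4) ∨ x = (3 : Fin 4))

/-- The contribution of one block to row `i` of the tableau `T^ω_n = φ_n(ω)`. -/
def phiRow (n i : ℕ) : Blk → List ℕ
  | .ab r => if 1 < i then ((List.range (i - 1)).map fun j => List.replicate r (j + 1)).flatten else []
  | .ba r => if 1 < i then ((List.range (i - 1)).map fun j => List.replicate r (i - 1 - j)).flatten else []
  | .cd r => if i < n then ((List.range (n - i)).map fun j => List.replicate r (i + 1 + j)).flatten else []
  | .dc r => if i < n then ((List.range (n - i)).map fun j => List.replicate r (n - j)).flatten else []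

/-- The tableau `T^ω_n = φ_n(ω)` on `[n]`, for the word `ω` given by the block
decomposition `L`. -/
def phiTab (n : ℕ) (L : List Blk) : ℕ → List ℕ :=
  fun i => if 1 ≤ i ∧ i ≤ n then (L.map (phiRow n i)).flatten else []

/-- A word of `W_(ab,cd)` is well-balanced if it has a prefix in `B*_(ab,cd)` with an
even number of `a`'s and an odd number of `c`'s, and also a prefix in `B*_(ab,cd)`
with an odd number of `a`'s and an even number of `c`'s. -/
def WellBalanced (w : List (Fin 4)) : Prop :=
  (∃ u v : List (Fin 4), w = u ++ v ∧ InBStar u ∧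
      Even (u.count (0 : Fin 4)) ∧ Odd (u.count (2 : Fin 4))) ∧
  (∃ u v : List (Fin 4), w = u ++ v ∧ InBStar u ∧
      Odd (u.count (0 : Fin 4)) ∧ Even (u.count (2 : Fin 4)))

/-! ### Valid matchings -/

/-- In a tableau, `{j, k}` is weakly adjacent when row `j` starts with `k` and
row `k` starts with `j`. -/
def WeaklyAdj (T : ℕ → List ℕ) (j k : ℕ) : Prop :=
  (T j).head? = some k ∧ (T k).head? = some j

/-- Delete the first entries of rows `j` and `k`. -/
def deletePair (T : ℕ → List ℕ) (j k : ℕ) : ℕ → List ℕ :=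
  fun i => if i = j ∨ i = k then (T i).tail else T i

/-- The deterministic matching process: while some row is nonempty, delete the first
entries of the rows of the lexicographically least weakly adjacent pair; `ValidRun T`
holds when the process terminates with all rows empty. -/
inductive ValidRun : (ℕ → List ℕ) → Prop
  | done (T : ℕ → List ℕ) (h : ∀ i, T i = []) : ValidRun T
  | step (T : ℕ → List ℕ) (j k : ℕ) (hjk : j < k) (hadj : WeaklyAdj T j k)
      (hmin : ∀ j' k' : ℕ, j' < k' → WeaklyAdj T j' k' → (j < j' ∨ (j = j' ∧ k ≤ k')))
      (h : ValidRun (deletePair T j k)) : ValidRun T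

/-!
Write `pattern a b w` for the word over `{false, true}` formed by the letters `a ↦ false` and
`b ↦ true` of `w`. Order equivalence of the restrictions of `T` to two triples `x < y < z` and
`x' < y' < z'` says exactly that corresponding rows have equal patterns on the two remaining
letters. Comparing the triples of `{1, 2, 3, 4}`:
* row `1` has the same pattern on `{2, 3}`, `{2, 4}` and `{3, 4}`; on these letters such a word
  starts with `2^r 3^r 4^r` or `4^r 3^r 2^r`, so peeling these off shows that `pattern 2 3 (T 1)`
  is balanced (and likewise `pattern 1 2 (T 4) = pattern 1 2 (T 3)`);
* row `2` has the same pattern on `{1, 3}` and `{1, 4}`, so between consecutive `1`'s it has as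
  many `3`'s as `4`'s; hence the factorization of `pattern 3 4 (T 2) = pattern 2 3 (T 1)` into
  blocks splits along these segments, i.e. its block sizes refine the exponents of `3` in
  `pattern 1 3 (T 2) = pattern 1 3 (U 2)`. Row `3` gives the condition on `U 3` in the same way.

Conversely, the conditions cut `U 2` into runs, each run `1^k` (resp. `3^k`) matched with blocks
of `U 3` (resp. `U 1`) of total size `k`; this is a word `ω` of blocks on `a ≺ b ≺ c ≺ d` with
`φ_3(ω) = U`. Restricting `φ_n(ω)` to any `X ⊆ [n]` and normalizing gives `φ_{|X|}(ω)`, so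
`φ_n(ω)` is regular and restricts to `U`.
-/

section Words

variable {α : Type*}

lemma exists_eq_replicate_append [DecidableEq α] (l : List α) (e : α) :
    ∃ r t, l = List.replicate r e ++ t ∧ t.head? ≠ some e := by
  induction l with
  | nil => exact ⟨0, [], rfl, by simp⟩
  | cons x l ih =>
    by_cases hx : x = e
    · obtain ⟨r, t, rfl, ht⟩ := ih
      exact ⟨r + 1, t, by simp [hx, List.replicate_succ], ht⟩
    · exact ⟨0, x :: l, rfl, by simpa using hx⟩

lemma le_of_replicate_append_eq {x y : α} {m k : ℕ} {l l' : List α}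
    (h : List.replicate m x ++ l = List.replicate k x ++ y :: l') (hy : y ≠ x) : m ≤ k := by
  by_contra! hkm
  rw [← Nat.add_sub_cancel' hkm.le, List.replicate_add, List.append_assoc] at h
  obtain ⟨d, hd⟩ := Nat.exists_eq_add_of_lt (Nat.sub_pos_of_lt hkm)
  rw [hd, List.replicate_succ] at h
  exact hy (List.cons_eq_cons.mp (List.append_cancel_left h)).1.symm

lemma replicate_append_cons_self (m : ℕ) (x : α) (l : List α) :
    List.replicate m x ++ x :: l = x :: (List.replicate m x ++ l) := by
  rw [← List.singleton_append, ← List.append_assoc, ← List.replicate_succ', List.replicate_succ,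
    List.cons_append]

lemma exists_eq_append_cons_of_mem [DecidableEq α] {x : α} {v : List α} (h : x ∈ v) :
    ∃ g w, v = g ++ x :: w ∧ x ∉ g := by
  induction v with
  | nil => simp at h
  | cons e v ih =>
    by_cases he : e = x
    · exact ⟨[], v, by simp [he], by simp⟩
    · obtain ⟨g, w, rfl, hg⟩ := ih ((List.mem_cons.mp h).resolve_left (Ne.symm he))
      exact ⟨e :: g, w, rfl, by simp [Ne.symm he, hg]⟩

lemma eq_nil_or_of_append_eq_replicate [DecidableEq α] {x y : α} (hxy : x ≠ y)
    {u w q : List α} {r : ℕ}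
    (h : u ++ w = List.replicate r x ++ List.replicate r y ++ q) (hu : u.count x = u.count y) :
    u = [] ∨ ∃ u', u = List.replicate r x ++ List.replicate r y ++ u' ∧ q = u' ++ w := by
  rcases List.append_eq_append_iff.mp h with ⟨a', hpre, rfl⟩ | ⟨c', rfl, rfl⟩
  · have hu' : u = (List.replicate r x ++ List.replicate r y).take u.length := by
      rw [hpre]; simp
    have hlen := congrArg List.length hpre
    simp only [List.length_append, List.length_replicate] at hlen
    rw [hu', List.take_append, List.take_replicate, List.take_replicate] at hu
    simp only [List.count_append, List.count_replicate, List.length_replicate, beq_self_eq_true,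
      if_true, beq_iff_eq, hxy, hxy.symm, if_false] at hu
    by_cases hℓ : u.length ≤ r
    · left
      exact List.length_eq_zero_iff.mp (by omega)
    · right
      have h2r : u.length = r + r := by omega
      refine ⟨[], ?_, ?_⟩
      · rw [hu', h2r, List.take_of_length_le (by simp)]; simp
      · have : a' = [] := List.length_eq_zero_iff.mp (by omega)
        simp [this]
  · exact Or.inr ⟨c', by simp, rfl⟩

end Words

section ExpSeq

variable {α β : Type*} [DecidableEq α] [DecidableEq β] {u x : α}

lemma expSeq_cons_of_ne (hx : x ≠ u) (l : List α) : expSeq u (x :: l) = expSeq u l := by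
  simp [expSeq, hx]

lemma expSeq_replicate_append_of_ne (hx : x ≠ u) (m : ℕ) (l : List α) :
    expSeq u (List.replicate m x ++ l) = expSeq u l := by
  induction m with
  | zero => rfl
  | succ m ih => rw [List.replicate_succ, List.cons_append, expSeq_cons_of_ne hx, ih]

lemma expSeq_cons_cons_self (y : α) (l : List α) :
    expSeq u (u :: y :: l) = if y = u
      then ((expSeq u (y :: l)).headD 0 + 1) :: (expSeq u (y :: l)).tail
      else 1 :: expSeq u (y :: l) := by
  by_cases h : y = u <;> simp [expSeq, h]

lemma expSeq_replicate_append {m : ℕ} (hm : 0 < m) {l : List α} (hl : l.head? ≠ some u) :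
    expSeq u (List.replicate m u ++ l) = m :: expSeq u l := by
  induction m with
  | zero => omega
  | succ m ih =>
    rcases Nat.eq_zero_or_pos m with rfl | hm
    · cases l with
      | nil => simp [expSeq]
      | cons y l =>
        have hy : y ≠ u := fun h => hl (by simp [h])
        simp [expSeq_cons_cons_self, hy]
    · obtain ⟨m, rfl⟩ := Nat.exists_eq_add_of_lt hm
      have ih := ih hm
      simp only [zero_add, List.replicate_succ, List.cons_append] at ih ⊢
      rw [expSeq_cons_cons_self, if_pos rfl, ih]
      rfl

lemma expSeq_map_of_injective {f : α → β} (hf : Function.Injective f) (u : α) (w : List α) :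
    expSeq (f u) (w.map f) = expSeq u w := by
  induction w with
  | nil => rfl
  | cons x w ih =>
    by_cases hxu : x = u
    · subst hxu
      cases w with
      | nil => simp [expSeq]
      | cons y w =>
        simp only [List.map_cons] at ih ⊢
        rw [expSeq_cons_cons_self, expSeq_cons_cons_self, ih]
        simp only [hf.eq_iff]
    · rw [List.map_cons, expSeq_cons_of_ne (hf.ne hxu), expSeq_cons_of_ne hxu, ih]

end ExpSeq

namespace HasBlockSizes

variable {α β : Type*} {a b : α} {w : List α} {s : List ℕ}

lemma balancedOn (h : HasBlockSizes a b w s) : BalancedOn a b w := by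
  induction h with
  | nil => exact .nil
  | lo r w s hr _ ih => exact .lo r w hr ih
  | hi r w s hr _ ih => exact .hi r w hr ih

lemma map (f : α → β) (h : HasBlockSizes a b w s) : HasBlockSizes (f a) (f b) (w.map f) s := by
  induction h with
  | nil => exact .nil
  | lo r w s hr _ ih => simpa using HasBlockSizes.lo r _ _ hr ih
  | hi r w s hr _ ih => simpa using HasBlockSizes.hi r _ _ hr ih

lemma pos (h : HasBlockSizes a b w s) : ∀ r ∈ s, 0 < r := by
  induction h with
  | nil => simp
  | lo r w s hr _ ih | hi r w s hr _ ih =>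
    simpa [hr] using ih

lemma sum_eq_zero_iff (h : HasBlockSizes a b w s) : s.sum = 0 ↔ s = [] := by
  refine ⟨fun h0 => ?_, fun h0 => by simp [h0]⟩
  rw [List.sum_eq_zero_iff] at h0
  exact List.eq_nil_iff_forall_not_mem.mpr fun r hr => (h.pos r hr).ne' (h0 r hr)

lemma count_eq_sum [DecidableEq α] (hab : a ≠ b) (h : HasBlockSizes a b w s) :
    w.count a = s.sum ∧ w.count b = s.sum := by
  induction h with
  | nil => simp
  | lo r w s hr _ ih | hi r w s hr _ ih =>
    simp [List.count_replicate, hab, hab.symm, ih.1, ih.2]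

lemma eq_nil_of_sizes_nil (h : HasBlockSizes a b w []) : w = [] := by
  cases h; rfl

lemma exists_append_of_sizes_append (s₁ : List ℕ) {s₂ : List ℕ}
    (h : HasBlockSizes a b w (s₁ ++ s₂)) :
    ∃ w₁ w₂, w = w₁ ++ w₂ ∧ HasBlockSizes a b w₁ s₁ ∧ HasBlockSizes a b w₂ s₂ := by
  induction s₁ generalizing w with
  | nil => exact ⟨[], w, rfl, .nil, h⟩
  | cons r s₁ ih =>
    cases h with
    | lo _ w _ hr hw =>
      obtain ⟨w₁, w₂, rfl, h₁, h₂⟩ := ih hw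
      exact ⟨_, w₂, by simp, .lo r w₁ s₁ hr h₁, h₂⟩
    | hi _ w _ hr hw =>
      obtain ⟨w₁, w₂, rfl, h₁, h₂⟩ := ih hw
      exact ⟨_, w₂, by simp, .hi r w₁ s₁ hr h₁, h₂⟩

lemma exists_split [DecidableEq α] (hab : a ≠ b) {u v : List α}
    (h : HasBlockSizes a b (u ++ v) s) (hu : u.count a = u.count b) :
    ∃ s₁ s₂, s = s₁ ++ s₂ ∧ HasBlockSizes a b u s₁ ∧ HasBlockSizes a b v s₂ := by
  generalize hw : u ++ v = w at h
  induction h generalizing u with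
  | nil =>
    obtain ⟨rfl, rfl⟩ := List.append_eq_nil_iff.mp hw
    exact ⟨[], [], rfl, .nil, .nil⟩
  | lo r w s hr hs ih =>
    rcases eq_nil_or_of_append_eq_replicate hab hw hu with rfl | ⟨u', rfl, rfl⟩
    · exact ⟨[], r :: s, rfl, .nil, by rw [← List.nil_append v, hw]; exact .lo r w s hr hs⟩
    · obtain ⟨s₁, s₂, rfl, h₁, h₂⟩ :=
        ih (u := u') (by simpa [List.count_replicate, hab, hab.symm] using hu) rfl
      exact ⟨r :: s₁, s₂, rfl, .lo r u' s₁ hr h₁, h₂⟩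
  | hi r w s hr hs ih =>
    rcases eq_nil_or_of_append_eq_replicate hab.symm hw hu.symm with rfl | ⟨u', rfl, rfl⟩
    · exact ⟨[], r :: s, rfl, .nil, by rw [← List.nil_append v, hw]; exact .hi r w s hr hs⟩
    · obtain ⟨s₁, s₂, rfl, h₁, h₂⟩ :=
        ih (u := u') (by simpa [List.count_replicate, hab, hab.symm] using hu) rfl
      exact ⟨r :: s₁, s₂, rfl, .hi r u' s₁ hr h₁, h₂⟩

end HasBlockSizes

lemma Refines.append_expSeq_replicate {α : Type*} [DecidableEq α] {u : α} {m : ℕ}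
    {s₁ s₂ : List ℕ} {q : List α} (hsum : s₁.sum = m) (hnil : s₁.sum = 0 ↔ s₁ = [])
    (hq : q.head? ≠ some u) (h : Refines s₂ (expSeq u q)) :
    Refines (s₁ ++ s₂) (expSeq u (List.replicate m u ++ q)) := by
  rcases Nat.eq_zero_or_pos m with rfl | hm
  · simpa [hnil.mp hsum] using h
  · rw [expSeq_replicate_append hm hq, ← hsum]
    exact .cons s₁ s₂ _ (fun h0 => by simp [h0] at hsum; omega) h

section Pattern

variable {α : Type*} [DecidableEq α] {a b e : α}

def pattern (a b : α) (v : List α) : List Bool :=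
  v.filterMap fun e => if e = a then some false else if e = b then some true else none

@[simp] lemma pattern_nil : pattern a b [] = [] := rfl

@[simp] lemma pattern_append (u v : List α) :
    pattern a b (u ++ v) = pattern a b u ++ pattern a b v :=
  List.filterMap_append

@[simp] lemma pattern_cons_left (v : List α) : pattern a b (a :: v) = false :: pattern a b v := by
  simp [pattern]

lemma pattern_cons_right (hab : a ≠ b) (v : List α) :
    pattern a b (b :: v) = true :: pattern a b v := by
  simp [pattern, hab.symm]

lemma pattern_cons_of_ne (ha : e ≠ a) (hb : e ≠ b) (v : List α) :
    pattern a b (e :: v) = pattern a b v := by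
  simp [pattern, ha, hb]

lemma pattern_replicate (r : ℕ) : pattern a b (List.replicate r e) =
    if e = a then List.replicate r false else if e = b then List.replicate r true else [] := by
  unfold pattern
  split_ifs with ha hb
  · exact List.filterMap_replicate_of_some (by rw [if_pos ha])
  · exact List.filterMap_replicate_of_some (by rw [if_neg ha, if_pos hb])
  · simp [ha, hb]

lemma pattern_swap (hab : a ≠ b) (v : List α) : pattern b a v = (pattern a b v).map not := by
  induction v with
  | nil => rfl
  | cons e v ih =>
    by_cases ha : e = a
    · subst ha; simp [pattern_cons_right hab.symm, ih]
    by_cases hb : e = b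
    · subst hb; simp [pattern_cons_right hab, ih]
    simp [pattern_cons_of_ne ha hb, pattern_cons_of_ne hb ha, ih]

lemma pattern_filter {p : α → Bool} (ha : p a) (hb : p b) (v : List α) :
    pattern a b (v.filter p) = pattern a b v := by
  induction v with
  | nil => rfl
  | cons e v ih =>
    by_cases he : p e
    · by_cases hea : e = a
      · subst hea; simp [List.filter_cons_of_pos he, ih]
      by_cases heb : e = b
      · subst heb; simp [List.filter_cons_of_pos he, pattern_cons_right (Ne.symm hea), ih]
      simp [List.filter_cons_of_pos he, pattern_cons_of_ne hea heb, ih]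
    · have hea : e ≠ a := by rintro rfl; exact he ha
      have heb : e ≠ b := by rintro rfl; exact he hb
      simp [List.filter_cons_of_neg he, pattern_cons_of_ne hea heb, ih]

lemma pattern_eq_replicate_of_notMem (hab : a ≠ b) {v : List α} (hv : a ∉ v) :
    pattern a b v = List.replicate (v.count b) true := by
  induction v with
  | nil => rfl
  | cons e v ih =>
    have hea : e ≠ a := fun h => hv (h ▸ List.mem_cons_self)
    have ih := ih fun h => hv (List.mem_cons_of_mem e h)
    by_cases heb : e = b
    · subst heb; simp [pattern_cons_right hab, ih, List.replicate_succ]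
    · simp [pattern_cons_of_ne hea heb, ih, heb]

lemma count_false_pattern (v : List α) : (pattern a b v).count false = v.count a := by
  induction v with
  | nil => rfl
  | cons e v ih =>
    by_cases ha : e = a
    · subst ha; simp [ih]
    by_cases hb : e = b
    · subst hb; simp [pattern_cons_right (Ne.symm ha), ih, ha]
    simp [pattern_cons_of_ne ha hb, ih, ha]

lemma count_true_pattern (hab : a ≠ b) (v : List α) : (pattern a b v).count true = v.count b := by
  rw [← count_false_pattern (b := a), pattern_swap hab, ← Bool.not_true,
    List.count_map_of_injective _ _ Bool.not_injective]

lemma cond_injective {β : Type*} {u v : β} (h : u ≠ v) : Function.Injective (cond · u v) := by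
  intro s t hst
  cases s <;> cases t <;> simp_all [eq_comm]

lemma map_pattern (hab : a ≠ b) {v : List α} (hv : ∀ e ∈ v, e = a ∨ e = b) :
    (pattern a b v).map (cond · b a) = v := by
  induction v with
  | nil => rfl
  | cons e v ih =>
    have ih := ih fun x hx => hv x (List.mem_cons_of_mem e hx)
    rcases hv e List.mem_cons_self with rfl | rfl
    · simp [ih]
    · simp [pattern_cons_right hab, ih]

lemma hasBlockSizes_of_pattern (hab : a ≠ b) {v : List α} (hv : ∀ e ∈ v, e = a ∨ e = b)
    {s : List ℕ} (h : HasBlockSizes false true (pattern a b v) s) : HasBlockSizes a b v s := by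
  simpa [map_pattern hab hv] using h.map (cond · b a)

lemma expSeq_eq_expSeq_pattern (hab : a ≠ b) {v : List α} (hv : ∀ e ∈ v, e = a ∨ e = b) :
    expSeq b v = expSeq true (pattern a b v) ∧ expSeq a v = expSeq false (pattern a b v) := by
  have h := fun t => expSeq_map_of_injective (cond_injective hab.symm) t (pattern a b v)
  rw [map_pattern hab hv] at h
  exact ⟨h true, h false⟩

lemma expSeq_true_pattern_swap {α : Type*} [DecidableEq α] {a b : α} (hab : a ≠ b) (v : List α) :
    expSeq true (pattern b a v) = expSeq false (pattern a b v) := by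
  rw [pattern_swap hab, ← Bool.not_false, expSeq_map_of_injective Bool.not_injective]

end Pattern

section Refinement

variable {α : Type*} [DecidableEq α] {x y z : α}

/-- Cut `v` at its letters `x`: on each piece `y` and `z` are equally frequent, so the blocks of
`pattern y z v` split along the pieces. -/
lemma refines_expSeq_pattern (hxy : x ≠ y) (hxz : x ≠ z) (hyz : y ≠ z) {v : List α}
    {s : List ℕ} (h : pattern x y v = pattern x z v)
    (hs : HasBlockSizes false true (pattern y z v) s) :
    Refines s (expSeq true (pattern x y v)) := by
  induction hk : v.count x generalizing v s with
  | zero =>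
    have hv : x ∉ v := List.count_eq_zero.mp hk
    rw [pattern_eq_replicate_of_notMem hxy hv] at h ⊢
    rw [pattern_eq_replicate_of_notMem hxz hv, List.replicate_inj] at h
    have hsum := (hs.count_eq_sum Bool.false_ne_true).1
    rw [count_false_pattern] at hsum
    simpa [h.1] using Refines.append_expSeq_replicate (s₂ := []) (q := []) (u := true)
      (m := v.count y) hsum.symm hs.sum_eq_zero_iff (by simp) .nil
  | succ k ih =>
    have hx : x ∈ v := List.count_pos_iff.mp (by omega)
    obtain ⟨g, w, rfl, hg⟩ := exists_eq_append_cons_of_mem hx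
    rw [pattern_append, pattern_append, pattern_cons_left, pattern_cons_left,
      pattern_eq_replicate_of_notMem hxy hg, pattern_eq_replicate_of_notMem hxz hg] at h
    have hyz_g : g.count y = g.count z :=
      le_antisymm (le_of_replicate_append_eq h (by simp))
        (le_of_replicate_append_eq h.symm (by simp))
    rw [hyz_g] at h
    have hw := List.cons_injective (List.append_cancel_left h)
    rw [pattern_append, pattern_cons_of_ne hxy hxz] at hs
    obtain ⟨s₁, s₂, rfl, hs₁, hs₂⟩ := hs.exists_split Bool.false_ne_true
      (by rw [count_false_pattern, count_true_pattern hyz, hyz_g])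
    have hsum := (hs₁.count_eq_sum Bool.false_ne_true).1
    rw [count_false_pattern] at hsum
    rw [pattern_append, pattern_cons_left, pattern_eq_replicate_of_notMem hxy hg]
    exact Refines.append_expSeq_replicate hsum.symm hs₁.sum_eq_zero_iff (by simp)
      (by rw [expSeq_cons_of_ne Bool.false_ne_true]
          exact ih hw hs₂ (by simpa [List.count_eq_zero.mpr hg] using hk))

end Refinement

section Balance

variable {α : Type*} [DecidableEq α] {a b c : α}

lemma exists_eq_blocks_of_pattern_eq (hab : a ≠ b) (hac : a ≠ c) (hbc : b ≠ c) {v : List α}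
    (hv : ∀ e ∈ v, e = a ∨ e = b ∨ e = c)
    (h₁ : pattern a b v = pattern a c v) (h₂ : pattern a b v = pattern b c v)
    (hhead : v.head? = some a) :
    ∃ r, 0 < r ∧
      ∃ v', v = List.replicate r a ++ List.replicate r b ++ List.replicate r c ++ v' := by
  obtain ⟨r, w, rfl, hw⟩ := exists_eq_replicate_append v a
  obtain ⟨j, w₁, rfl, hw₁⟩ := exists_eq_replicate_append w b
  obtain ⟨k, w₂, rfl, hw₂⟩ := exists_eq_replicate_append w₁ c
  have hr : 0 < r := Nat.pos_of_ne_zero fun h0 => hw (by simpa [h0] using hhead)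
  simp only [pattern_append, pattern_replicate, ↓reduceIte, hab, hac, hbc, hab.symm, hac.symm,
    hbc.symm, List.nil_append, List.append_cancel_left_eq] at h₁ h₂
  suffices j = r ∧ r ≤ k by
    obtain ⟨rfl, hrk⟩ := this
    obtain ⟨d, rfl⟩ := Nat.exists_eq_add_of_le hrk
    exact ⟨j, hr, List.replicate d c ++ w₂, by simp only [List.replicate_add, List.append_assoc]⟩
  rcases w₂ with _ | ⟨e, w₃⟩
  · simp only [pattern_nil, List.append_nil, List.replicate_inj] at h₁ h₂
    have := congrArg (List.count false) h₂
    simp only [List.count_append, List.count_replicate_self, List.count_replicate, beq_false,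
      Bool.not_true, Bool.false_eq_true, ↓reduceIte, add_zero] at this
    omega
  rcases hv e (by simp) with rfl | rfl | rfl
  · rw [pattern_cons_left, pattern_cons_left] at h₁
    have hjk : j = k := le_antisymm (le_of_replicate_append_eq h₁ (by simp))
      (le_of_replicate_append_eq h₁.symm (by simp))
    subst hjk
    obtain ⟨j, rfl⟩ : ∃ j', j = j' + 1 := Nat.exists_eq_succ_of_ne_zero fun h0 => hw (by simp [h0])
    rw [show List.replicate (j + 1) true = true :: List.replicate j true from rfl] at h₂
    obtain rfl : j + 1 = r := le_antisymm (le_of_replicate_append_eq h₂.symm (by simp))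
      (le_of_replicate_append_eq h₂ (by simp))
    exact ⟨rfl, le_rfl⟩
  · rw [pattern_cons_right hab, pattern_cons_left, replicate_append_cons_self] at h₂
    obtain ⟨k, rfl⟩ : ∃ k', k = k' + 1 :=
      Nat.exists_eq_succ_of_ne_zero fun h0 => hw₁ (by simp [h0])
    rw [List.replicate_succ, List.cons_append] at h₂
    have hrj : r = j := le_antisymm (le_of_replicate_append_eq h₂ (by simp))
      (le_of_replicate_append_eq h₂.symm (by simp))
    subst hrj
    rw [List.append_cancel_left_eq, List.cons_inj_right] at h₂
    exact ⟨rfl, (le_of_replicate_append_eq h₂ (by simp)).trans k.le_succ⟩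
  · simp at hw₂

lemma exists_hasBlockSizes_pattern_of_forall_mem (hab : a ≠ b) (hac : a ≠ c) (hbc : b ≠ c)
    {v : List α} (hv : ∀ e ∈ v, e = a ∨ e = b ∨ e = c)
    (h₁ : pattern a b v = pattern a c v) (h₂ : pattern a b v = pattern b c v) :
    ∃ s, HasBlockSizes false true (pattern a b v) s := by
  induction hn : v.length using Nat.strong_induction_on generalizing v with
  | _ n ih =>
  rcases v with _ | ⟨e, v₀⟩
  · exact ⟨[], .nil⟩
  rcases hv e List.mem_cons_self with rfl | rfl | rfl
  · obtain ⟨r, hr, v', hv'⟩ := exists_eq_blocks_of_pattern_eq hab hac hbc hv h₁ h₂ rfl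
    rw [hv'] at hv h₁ h₂ hn ⊢
    simp only [List.append_assoc, pattern_append, pattern_replicate, ↓reduceIte, hab, hac, hbc,
      hab.symm, hac.symm, hbc.symm, List.nil_append, List.append_cancel_left_eq] at h₁ h₂ ⊢
    obtain ⟨s, hs⟩ := ih v'.length (by simp at hn; omega) (fun x hx => hv x (by simp [hx]))
      h₁ h₂ rfl
    exact ⟨r :: s, by simpa using HasBlockSizes.lo r _ s hr hs⟩
  · simp [pattern_cons_right hab] at h₂
  · have h₁' : pattern e b (e :: v₀) = pattern e a (e :: v₀) := by
      rw [pattern_swap hbc, pattern_swap hac, ← h₁, h₂]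
    have h₂' : pattern e b (e :: v₀) = pattern b a (e :: v₀) := by
      rw [pattern_swap hbc, pattern_swap hab, h₂]
    obtain ⟨r, hr, v', hv'⟩ := exists_eq_blocks_of_pattern_eq hbc.symm hac.symm hab.symm
      (fun x hx => by rcases hv x hx with h | h | h <;> simp [h]) h₁' h₂' rfl
    rw [hv'] at hv h₁ h₂ hn ⊢
    simp only [List.append_assoc, pattern_append, pattern_replicate, ↓reduceIte, hab, hac, hbc,
      hab.symm, hac.symm, hbc.symm, List.nil_append, List.append_cancel_left_eq] at h₁ h₂ ⊢
    obtain ⟨s, hs⟩ := ih v'.length (by simp at hn; omega) (fun x hx => hv x (by simp [hx]))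
      h₁ h₂ rfl
    exact ⟨r :: s, by simpa using HasBlockSizes.hi r _ s hr hs⟩

lemma exists_hasBlockSizes_pattern (hab : a ≠ b) (hac : a ≠ c) (hbc : b ≠ c) {v : List α}
    (h₁ : pattern a b v = pattern a c v) (h₂ : pattern a b v = pattern b c v) :
    ∃ s, HasBlockSizes false true (pattern a b v) s := by
  set w := v.filter (· ∈ [a, b, c])
  obtain ⟨e₁, e₂, e₃⟩ : pattern a b w = pattern a b v ∧ pattern a c w = pattern a c v ∧
      pattern b c w = pattern b c v :=
    ⟨pattern_filter (by simp) (by simp) v, pattern_filter (by simp) (by simp) v,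
      pattern_filter (by simp) (by simp) v⟩
  rw [← e₁, ← e₂] at h₁
  rw [← e₁, ← e₃] at h₂
  rw [← e₁]
  exact exists_hasBlockSizes_pattern_of_forall_mem hab hac hbc
    (fun e he => by simpa using (List.mem_filter.mp he).2) h₁ h₂

end Balance

section Triples

variable {x y z : ℕ}

lemma card_triple (hxy : x < y) (hyz : y < z) : ({x, y, z} : Finset ℕ).card = 3 := by
  rw [Finset.card_insert_of_notMem (by simp; omega), Finset.card_pair hyz.ne]

lemma sort_triple (hxy : x < y) (hyz : y < z) :
    Finset.sort ({x, y, z} : Finset ℕ) = [x, y, z] := by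
  have h := (List.toFinset_sort (· ≤ ·) (l := [x, y, z]) (by simp; omega)).mpr (by simp; omega)
  simpa using h

lemma rankIn_triple (hxy : x < y) (hyz : y < z) :
    rankIn {x, y, z} x = 1 ∧ rankIn {x, y, z} y = 2 ∧ rankIn {x, y, z} z = 3 := by
  have hxz := hxy.trans hyz
  simp [rankIn, Finset.filter_insert, Finset.filter_singleton, hxy.not_ge, hyz.not_ge,
    hxz.not_ge, hxy.le, hyz.le, hxz.le, hxy.ne, card_triple hxy hyz]

lemma exists_eq_triple_of_card_eq_three {X : Finset ℕ} (h : X.card = 3) :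
    ∃ x y z, x < y ∧ y < z ∧ X = {x, y, z} := by
  obtain ⟨x, y, z, hs⟩ := List.length_eq_three.mp (by simpa using h : (Finset.sort X).length = 3)
  have hsorted := X.sortedLT_sort.pairwise
  rw [hs] at hsorted
  simp only [List.pairwise_cons, List.mem_cons, List.not_mem_nil] at hsorted
  refine ⟨x, y, z, hsorted.1 y (by simp), hsorted.2.1 z (by simp), ?_⟩
  ext e
  rw [← Finset.mem_sort (· ≤ ·), hs]
  simp

end Triples

lemma tabEquiv_triple_iff {x y z x' y' z' : ℕ} (hxy : x < y) (hyz : y < z) (hxy' : x' < y')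
    (hyz' : y' < z') (T T' : ℕ → List ℕ) :
    TabEquiv {x, y, z} {x', y', z'} T T' ↔
      (T x).map (rankIn {x, y, z}) = (T' x').map (rankIn {x', y', z'}) ∧
      (T y).map (rankIn {x, y, z}) = (T' y').map (rankIn {x', y', z'}) ∧
      (T z).map (rankIn {x, y, z}) = (T' z').map (rankIn {x', y', z'}) := by
  simp only [TabEquiv, card_triple hxy hyz, card_triple hxy' hyz', sort_triple hxy hyz,
    sort_triple hxy' hyz', true_and]
  constructor
  · intro h
    exact ⟨h 0 (by norm_num), h 1 (by norm_num), h 2 (by norm_num)⟩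
  · rintro ⟨h₀, h₁, h₂⟩ j hj
    interval_cases j <;> assumption

lemma map_rankIn_filter {X : Finset ℕ} {i a b : ℕ} (hX : ∀ e, e ∈ X ↔ e = i ∨ e = a ∨ e = b)
    {w : List ℕ} (hw : i ∉ w) :
    (w.filter (· ∈ X)).map (rankIn X) = (pattern a b w).map (cond · (rankIn X b) (rankIn X a)) := by
  induction w with
  | nil => rfl
  | cons e w ih =>
    have hei : e ≠ i := fun h => hw (h ▸ List.mem_cons_self)
    have ih := ih fun h => hw (List.mem_cons_of_mem e h)
    by_cases hea : e = a
    · subst hea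
      rw [List.filter_cons_of_pos (by simp [hX]), List.map_cons, ih, pattern_cons_left]
      rfl
    by_cases heb : e = b
    · subst heb
      rw [List.filter_cons_of_pos (by simp [hX]), List.map_cons, ih,
        pattern_cons_right (Ne.symm hea)]
      rfl
    · rw [List.filter_cons_of_neg (by simp [hX, hei, hea, heb]), ih, pattern_cons_of_ne hea heb]

lemma pattern_eq_of_map_rankIn_filter_eq {X Y : Finset ℕ} {i a b i' a' b' : ℕ}
    (hX : ∀ e, e ∈ X ↔ e = i ∨ e = a ∨ e = b) (hY : ∀ e, e ∈ Y ↔ e = i' ∨ e = a' ∨ e = b')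
    {w w' : List ℕ} (hw : i ∉ w) (hw' : i' ∉ w') (ha : rankIn X a = rankIn Y a')
    (hb : rankIn X b = rankIn Y b') (hab : rankIn X a ≠ rankIn X b)
    (h : (w.filter (· ∈ X)).map (rankIn X) = (w'.filter (· ∈ Y)).map (rankIn Y)) :
    pattern a b w = pattern a' b' w' := by
  rw [map_rankIn_filter hX hw, map_rankIn_filter hY hw', ← ha, ← hb] at h
  exact List.map_injective_iff.mpr (cond_injective hab.symm) h

lemma restrictTab_of_mem {X : Finset ℕ} {i : ℕ} (hi : i ∈ X) (T : ℕ → List ℕ) :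
    restrictTab X T i = (T i).filter (· ∈ X) :=
  if_pos hi

lemma IsRegularTableau.pattern_eq {A : Finset ℕ} {T : ℕ → List ℕ} (hT : IsRegularTableau A T)
    {x y z x' y' z' : ℕ} (hxy : x < y) (hyz : y < z) (hxy' : x' < y') (hyz' : y' < z')
    (hX : {x, y, z} ⊆ A) (hY : {x', y', z'} ⊆ A) :
    pattern y z (T x) = pattern y' z' (T x') ∧ pattern x z (T y) = pattern x' z' (T y') ∧
      pattern x y (T z) = pattern x' y' (T z') := by
  have hrow : ∀ i ∈ A, i ∉ T i := fun i hi h => (hT.1.1 i hi i h).2 rfl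
  obtain ⟨h₁, h₂, h₃⟩ := (tabEquiv_triple_iff hxy hyz hxy' hyz' _ _).mp
    (hT.2.2 _ _ hX hY (card_triple hxy hyz) (card_triple hxy' hyz'))
  rw [restrictTab_of_mem (by simp), restrictTab_of_mem (by simp)] at h₁ h₂ h₃
  obtain ⟨r₁, r₂, r₃⟩ := rankIn_triple hxy hyz
  obtain ⟨r₁', r₂', r₃'⟩ := rankIn_triple hxy' hyz'
  refine ⟨pattern_eq_of_map_rankIn_filter_eq (fun e => ?_) (fun e => ?_) (hrow _ (hX ?_))
      (hrow _ (hY ?_)) ?_ ?_ ?_ h₁,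
    pattern_eq_of_map_rankIn_filter_eq (fun e => ?_) (fun e => ?_) (hrow _ (hX ?_))
      (hrow _ (hY ?_)) ?_ ?_ ?_ h₂,
    pattern_eq_of_map_rankIn_filter_eq (fun e => ?_) (fun e => ?_) (hrow _ (hX ?_))
      (hrow _ (hY ?_)) ?_ ?_ ?_ h₃⟩ <;> simp [*] <;> tauto

lemma IsRegularTableau.exists_refines_pattern {n : ℕ} (hn : 4 ≤ n) {T : ℕ → List ℕ}
    (hT : IsRegularTableau (Finset.Icc 1 n) T) :
    (∃ s, HasBlockSizes false true (pattern 2 3 (T 1)) s ∧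
      Refines s (expSeq true (pattern 1 3 (T 2)))) ∧
    (∃ t, HasBlockSizes false true (pattern 1 2 (T 3)) t ∧
      Refines t (expSeq false (pattern 1 3 (T 2)))) := by
  have P : ∀ x y z x' y' z' : ℕ, 1 ≤ x ∧ x < y ∧ y < z ∧ z ≤ 4 →
      1 ≤ x' ∧ x' < y' ∧ y' < z' ∧ z' ≤ 4 →
      pattern y z (T x) = pattern y' z' (T x') ∧ pattern x z (T y) = pattern x' z' (T y') ∧
        pattern x y (T z) = pattern x' y' (T z') := by
    rintro x y z x' y' z' ⟨hx, hxy, hyz, hz⟩ ⟨hx', hxy', hyz', hz'⟩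
    exact hT.pattern_eq hxy hyz hxy' hyz' (by intro e; simp; omega) (by intro e; simp; omega)
  have row₁ : pattern 2 3 (T 1) = pattern 2 4 (T 1) ∧ pattern 2 3 (T 1) = pattern 3 4 (T 1) :=
    ⟨(P 1 2 3 1 2 4 (by decide) (by decide)).1, (P 1 2 3 1 3 4 (by decide) (by decide)).1⟩
  have row₄ : pattern 1 2 (T 4) = pattern 1 3 (T 4) ∧ pattern 1 2 (T 4) = pattern 2 3 (T 4) :=
    ⟨(P 1 2 4 1 3 4 (by decide) (by decide)).2.2, (P 1 2 4 2 3 4 (by decide) (by decide)).2.2⟩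
  have row₂ : pattern 1 3 (T 2) = pattern 1 4 (T 2) := (P 1 2 3 1 2 4 (by decide) (by decide)).2.1
  have row₃ : pattern 1 4 (T 3) = pattern 2 4 (T 3) := (P 1 3 4 2 3 4 (by decide) (by decide)).2.1
  have h₁₂ : pattern 2 3 (T 1) = pattern 3 4 (T 2) := (P 1 2 3 2 3 4 (by decide) (by decide)).1
  have h₂₃ : pattern 1 3 (T 2) = pattern 1 4 (T 3) := (P 1 2 3 1 3 4 (by decide) (by decide)).2.1
  have h₃₄ : pattern 1 2 (T 3) = pattern 1 2 (T 4) := (P 1 2 3 1 2 4 (by decide) (by decide)).2.2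
  obtain ⟨s, hs⟩ := exists_hasBlockSizes_pattern (by decide) (by decide) (by decide) row₁.1 row₁.2
  obtain ⟨t, ht⟩ := exists_hasBlockSizes_pattern (by decide) (by decide) (by decide) row₄.1 row₄.2
  rw [← h₃₄] at ht
  refine ⟨⟨s, hs, refines_expSeq_pattern (by decide) (by decide) (by decide) row₂ (h₁₂ ▸ hs)⟩,
    ⟨t, ht, ?_⟩⟩
  have row₃' : pattern 4 1 (T 3) = pattern 4 2 (T 3) := by
    rw [pattern_swap (by decide), pattern_swap (a := 2) (by decide), row₃]
  have := refines_expSeq_pattern (by decide) (by decide) (by decide) row₃' ht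
  rwa [expSeq_true_pattern_swap (by decide), ← h₂₃] at this

lemma IsTableau.restrictTab {A X : Finset ℕ} {T : ℕ → List ℕ} (hT : IsTableau A T) (hX : X ⊆ A) :
    IsTableau X (restrictTab X T) := by
  refine ⟨fun i hi e he => ?_, fun i hi => if_neg hi⟩
  rw [restrictTab_of_mem hi, List.mem_filter, decide_eq_true_iff] at he
  exact ⟨he.2, (hT.1 i (hX hi) e he.1).2⟩

lemma IsTableau.forall_mem_three {U : ℕ → List ℕ} (hU : IsTableau {1, 2, 3} U) :
    (∀ e ∈ U 1, e = 2 ∨ e = 3) ∧ (∀ e ∈ U 2, e = 1 ∨ e = 3) ∧ (∀ e ∈ U 3, e = 1 ∨ e = 2) := by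
  refine ⟨fun e he => ?_, fun e he => ?_, fun e he => ?_⟩ <;>
  · have := hU.1 _ (by simp) e he
    simp only [Finset.mem_insert, Finset.mem_singleton] at this
    omega

lemma IsRegularTableau.exists_refines_restrictTab {n : ℕ} (hn : 4 ≤ n) {T : ℕ → List ℕ}
    (hT : IsRegularTableau (Finset.Icc 1 n) T) :
    (∃ s, HasBlockSizes 2 3 (restrictTab {1, 2, 3} T 1) s ∧
      Refines s (expSeq 3 (restrictTab {1, 2, 3} T 2))) ∧
    (∃ t, HasBlockSizes 1 2 (restrictTab {1, 2, 3} T 3) t ∧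
      Refines t (expSeq 1 (restrictTab {1, 2, 3} T 2))) := by
  set U := restrictTab {1, 2, 3} T
  have hU : IsTableau {1, 2, 3} U := hT.1.restrictTab (by intro e; simp; omega)
  obtain ⟨hU₁, hU₂, hU₃⟩ := hU.forall_mem_three
  have hp : ∀ i a b : ℕ, i ∈ ({1, 2, 3} : Finset ℕ) → a ∈ ({1, 2, 3} : Finset ℕ) →
      b ∈ ({1, 2, 3} : Finset ℕ) → pattern a b (U i) = pattern a b (T i) :=
    fun i a b hi ha hb => by
      simp only [U, restrictTab_of_mem hi]
      exact pattern_filter (by simpa using ha) (by simpa using hb) _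
  obtain ⟨⟨s, hs, hs'⟩, ⟨t, ht, ht'⟩⟩ := hT.exists_refines_pattern hn
  rw [← hp 1 2 3 (by simp) (by simp) (by simp)] at hs
  rw [← hp 3 1 2 (by simp) (by simp) (by simp)] at ht
  rw [← hp 2 1 3 (by simp) (by simp) (by simp)] at hs' ht'
  refine ⟨⟨s, hasBlockSizes_of_pattern (by decide) hU₁ hs, ?_⟩,
    ⟨t, hasBlockSizes_of_pattern (by decide) hU₃ ht, ?_⟩⟩
  · rwa [(expSeq_eq_expSeq_pattern (by decide) hU₂).1]
  · rwa [(expSeq_eq_expSeq_pattern (by decide) hU₂).2]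

section Rank

variable {X : Finset ℕ}

lemma rankIn_succ (a : ℕ) : rankIn X (a + 1) = rankIn X a + if a + 1 ∈ X then 1 else 0 := by
  rw [rankIn, rankIn, Finset.filter_congr (q := fun e => e ≤ a ∨ e = a + 1) (fun e _ => by omega),
    Finset.filter_or, Finset.card_union_of_disjoint
      (Finset.disjoint_filter.mpr fun _ _ h h' => by omega), Finset.filter_eq']
  split_ifs <;> simp

lemma rankIn_mono : Monotone (rankIn X) := fun _ _ h =>
  Finset.card_le_card fun e he => by
    simp only [Finset.mem_filter] at he ⊢
    exact ⟨he.1, he.2.trans h⟩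

lemma rankIn_zero (h : 0 ∉ X) : rankIn X 0 = 0 := by
  simp only [rankIn, Finset.card_eq_zero, Finset.filter_eq_empty_iff, nonpos_iff_eq_zero]
  exact fun e he h0 => h (h0 ▸ he)

lemma rankIn_eq_card {n : ℕ} (h : ∀ e ∈ X, e ≤ n) : rankIn X n = X.card := by
  rw [rankIn, Finset.filter_true_of_mem h]

lemma map_rankIn_filter_range' (i m : ℕ) :
    ((List.range' (i + 1) m).filter (· ∈ X)).map (rankIn X) =
      List.range' (rankIn X i + 1) (rankIn X (i + m) - rankIn X i) := by
  induction m with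
  | zero => simp
  | succ m ih =>
    have hle := rankIn_mono (X := X) (Nat.le_add_right i m)
    rw [List.range'_concat, one_mul, List.filter_append, List.map_append, ih, ← add_assoc,
      rankIn_succ, add_right_comm]
    by_cases hm : i + m + 1 ∈ X
    · have hR : rankIn X (i + m + 1) = rankIn X (i + m) + 1 := by simp [rankIn_succ, hm]
      rw [if_pos hm, List.filter_singleton, decide_eq_true hm, cond_true, List.map_singleton, hR,
        show rankIn X (i + m) + 1 - rankIn X i = rankIn X (i + m) - rankIn X i + 1 by omega,
        List.range'_concat, one_mul, show rankIn X i + 1 + (rankIn X (i + m) - rankIn X i) =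
          rankIn X (i + m) + 1 by omega]
    · simp [hm]

end Rank

def blockLetters (n i : ℕ) : Blk → List ℕ
  | .ab _ => List.range' 1 (i - 1)
  | .ba _ => (List.range' 1 (i - 1)).reverse
  | .cd _ => List.range' (i + 1) (n - i)
  | .dc _ => (List.range' (i + 1) (n - i)).reverse

lemma phiRow_eq_flatMap (n i : ℕ) (b : Blk) :
    phiRow n i b = (blockLetters n i b).flatMap (List.replicate b.r) := by
  cases b <;> simp only [phiRow, blockLetters, Blk.r, List.reverse_range'] <;>
    simp only [List.range'_eq_map_range, List.flatMap_def, List.map_map] <;>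
    split_ifs with h
  all_goals first
    | rfl
    | (congr 2; funext j; simp only [Function.comp_apply]; congr 1; omega)
    | simp [show i - 1 = 0 by omega]
    | simp [show n - i = 0 by omega]

lemma map_filter_flatMap_replicate {β : Type*} (p : ℕ → Bool) (f : ℕ → β) (r : ℕ) (l : List ℕ) :
    ((l.flatMap (List.replicate r)).filter p).map f =
      ((l.filter p).map f).flatMap (List.replicate r) := by
  induction l with
  | nil => rfl
  | cons e l ih =>
    by_cases he : p e <;> simp [List.filter_append, he, ih]

lemma map_rankIn_filter_blockLetters {n : ℕ} {X : Finset ℕ} (hX : X ⊆ Finset.Icc 1 n) {i : ℕ}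
    (hi : i ∈ X) (b : Blk) :
    ((blockLetters n i b).filter (· ∈ X)).map (rankIn X) = blockLetters X.card (rankIn X i) b := by
  obtain ⟨hi1, hin⟩ := Finset.mem_Icc.mp (hX hi)
  have h0 : rankIn X 0 = 0 := rankIn_zero fun h => by simpa using hX h
  have hcard : rankIn X n = X.card := rankIn_eq_card fun e he => (Finset.mem_Icc.mp (hX he)).2
  have hpred : rankIn X (i - 1) + 1 = rankIn X i := by
    have := rankIn_succ (X := X) (i - 1)
    rw [Nat.sub_add_cancel hi1, if_pos hi] at this
    exact this.symm
  have below : ((List.range' 1 (i - 1)).filter (· ∈ X)).map (rankIn X) =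
      List.range' 1 (rankIn X i - 1) := by
    rw [map_rankIn_filter_range' 0 (i - 1), h0, zero_add, zero_add, Nat.sub_zero, ← hpred,
      Nat.add_sub_cancel]
  have above : ((List.range' (i + 1) (n - i)).filter (· ∈ X)).map (rankIn X) =
      List.range' (rankIn X i + 1) (X.card - rankIn X i) := by
    rw [map_rankIn_filter_range', Nat.add_sub_cancel' hin, hcard]
  cases b <;> simp only [blockLetters, List.filter_reverse, List.map_reverse, below, above]

lemma map_rankIn_restrictTab_phiTab {n : ℕ} {X : Finset ℕ} (hX : X ⊆ Finset.Icc 1 n) {i : ℕ}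
    (hi : i ∈ X) (L : List Blk) :
    (restrictTab X (phiTab n L) i).map (rankIn X) = phiTab X.card L (rankIn X i) := by
  have hr : 1 ≤ rankIn X i ∧ rankIn X i ≤ X.card :=
    ⟨Finset.card_pos.mpr ⟨i, by simp [hi]⟩, Finset.card_filter_le _ _⟩
  rw [restrictTab_of_mem hi, phiTab, phiTab, if_pos (Finset.mem_Icc.mp (hX hi)), if_pos hr,
    ← List.flatMap_def, ← List.flatMap_def, List.filter_flatMap, List.map_flatMap]
  congr 1
  funext b
  rw [phiRow_eq_flatMap, phiRow_eq_flatMap, map_filter_flatMap_replicate,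
    map_rankIn_filter_blockLetters hX hi]

lemma mem_blockLetters {n i e : ℕ} (hin : i ≤ n) {b : Blk} (he : e ∈ blockLetters n i b) :
    e ∈ Finset.Icc 1 n ∧ e ≠ i := by
  rw [Finset.mem_Icc]
  cases b <;> simp only [blockLetters, List.mem_reverse, List.mem_range'_1] at he <;> omega

lemma isTableau_phiTab (n : ℕ) (L : List Blk) : IsTableau (Finset.Icc 1 n) (phiTab n L) := by
  refine ⟨fun i hi e he => ?_, fun i hi => if_neg (by simpa using hi)⟩
  rw [phiTab, if_pos (Finset.mem_Icc.mp hi), ← List.flatMap_def, List.mem_flatMap] at he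
  obtain ⟨b, -, he⟩ := he
  rw [phiRow_eq_flatMap, List.mem_flatMap] at he
  obtain ⟨e', he', he⟩ := he
  rw [List.eq_of_mem_replicate he]
  exact mem_blockLetters (Finset.mem_Icc.mp hi).2 he'

lemma isRegularTableau_phiTab {n : ℕ} (hn : 4 ≤ n) (L : List Blk) :
    IsRegularTableau (Finset.Icc 1 n) (phiTab n L) := by
  refine ⟨isTableau_phiTab n L, by simpa using hn, fun X Y hX hY hcX hcY => ?_⟩
  obtain ⟨x, y, z, hxy, hyz, rfl⟩ := exists_eq_triple_of_card_eq_three hcX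
  obtain ⟨x', y', z', hxy', hyz', rfl⟩ := exists_eq_triple_of_card_eq_three hcY
  obtain ⟨r₁, r₂, r₃⟩ := rankIn_triple hxy hyz
  obtain ⟨r₁', r₂', r₃'⟩ := rankIn_triple hxy' hyz'
  rw [tabEquiv_triple_iff hxy hyz hxy' hyz',
    map_rankIn_restrictTab_phiTab hX (i := x) (by simp),
    map_rankIn_restrictTab_phiTab hX (i := y) (by simp),
    map_rankIn_restrictTab_phiTab hX (i := z) (by simp),
    map_rankIn_restrictTab_phiTab hY (i := x') (by simp),
    map_rankIn_restrictTab_phiTab hY (i := y') (by simp),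
    map_rankIn_restrictTab_phiTab hY (i := z') (by simp), hcX, hcY, r₁, r₂, r₃, r₁', r₂', r₃']
  exact ⟨rfl, rfl, rfl⟩

lemma restrictTab_phiTab_three {n : ℕ} (hn : 3 ≤ n) (L : List Blk) :
    restrictTab {1, 2, 3} (phiTab n L) = phiTab 3 L := by
  funext i
  by_cases hi : i ∈ ({1, 2, 3} : Finset ℕ)
  · have hid : ∀ e ∈ ({1, 2, 3} : Finset ℕ), rankIn {1, 2, 3} e = e := by
      obtain ⟨r₁, r₂, r₃⟩ := rankIn_triple (by norm_num : 1 < 2) (by norm_num : 2 < 3)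
      simp only [Finset.mem_insert, Finset.mem_singleton]
      rintro e (rfl | rfl | rfl) <;> assumption
    have hX : ({1, 2, 3} : Finset ℕ) ⊆ Finset.Icc 1 n := by
      simp only [Finset.insert_subset_iff, Finset.singleton_subset_iff, Finset.mem_Icc]
      omega
    have h := map_rankIn_restrictTab_phiTab hX hi L
    rwa [List.map_congr_left fun e he => hid e ?_, List.map_id', hid i hi,
      card_triple (by norm_num) (by norm_num)] at h
    rw [restrictTab_of_mem hi, List.mem_filter, decide_eq_true_iff] at he
    exact he.2
  · rw [restrictTab, if_neg hi, phiTab, if_neg (by simp at hi; omega)]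

lemma exists_blocks_of_hasBlockSizes_two_three {w : List ℕ} {g : List ℕ}
    (h : HasBlockSizes 2 3 w g) :
    ∃ L : List Blk, L.flatMap (phiRow 3 1) = w ∧
      L.flatMap (phiRow 3 2) = List.replicate g.sum 3 ∧ L.flatMap (phiRow 3 3) = [] := by
  induction h with
  | nil => exact ⟨[], rfl, rfl, rfl⟩
  | lo r w s _ _ ih =>
    obtain ⟨L, h₁, h₂, h₃⟩ := ih
    exact ⟨.cd r :: L, by simp [phiRow, List.range_succ, h₁, h₂, h₃]⟩
  | hi r w s _ _ ih =>
    obtain ⟨L, h₁, h₂, h₃⟩ := ih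
    exact ⟨.dc r :: L, by simp [phiRow, List.range_succ, h₁, h₂, h₃]⟩

lemma exists_blocks_of_hasBlockSizes_one_two {w : List ℕ} {g : List ℕ}
    (h : HasBlockSizes 1 2 w g) :
    ∃ L : List Blk, L.flatMap (phiRow 3 1) = [] ∧
      L.flatMap (phiRow 3 2) = List.replicate g.sum 1 ∧ L.flatMap (phiRow 3 3) = w := by
  induction h with
  | nil => exact ⟨[], rfl, rfl, rfl⟩
  | lo r w s _ _ ih =>
    obtain ⟨L, h₁, h₂, h₃⟩ := ih
    exact ⟨.ab r :: L, by simp [phiRow, List.range_succ, h₁, h₂, h₃]⟩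
  | hi r w s _ _ ih =>
    obtain ⟨L, h₁, h₂, h₃⟩ := ih
    exact ⟨.ba r :: L, by simp [phiRow, List.range_succ, h₁, h₂, h₃]⟩

lemma exists_blocks {u₂ : List ℕ} (hu₂ : ∀ e ∈ u₂, e = 1 ∨ e = 3) {u₁ u₃ s t : List ℕ}
    (h₁ : HasBlockSizes 2 3 u₁ s) (hs : Refines s (expSeq 3 u₂))
    (h₃ : HasBlockSizes 1 2 u₃ t) (ht : Refines t (expSeq 1 u₂)) :
    ∃ L : List Blk, L.flatMap (phiRow 3 1) = u₁ ∧ L.flatMap (phiRow 3 2) = u₂ ∧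
      L.flatMap (phiRow 3 3) = u₃ := by
  induction hn : u₂.length using Nat.strong_induction_on generalizing u₂ u₁ u₃ s t with
  | _ n ih =>
  rcases u₂ with _ | ⟨e, u⟩
  · cases hs
    cases ht
    rw [h₁.eq_nil_of_sizes_nil, h₃.eq_nil_of_sizes_nil]
    exact ⟨[], rfl, rfl, rfl⟩
  obtain ⟨k, V, hdec, hV⟩ := exists_eq_replicate_append (e :: u) e
  have hk : 0 < k := Nat.pos_of_ne_zero fun h0 => hV (by simp [h0] at hdec; simp [← hdec])
  rw [hdec] at hu₂ hs ht hn ⊢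
  have hVmem : ∀ x ∈ V, x = 1 ∨ x = 3 := fun x hx => hu₂ x (by simp [hx])
  have hVlen : V.length < n := by simp at hn; omega
  rcases hu₂ e (by simp [hk.ne']) with rfl | rfl
  · rw [expSeq_replicate_append hk hV] at ht
    rw [expSeq_replicate_append_of_ne (by decide)] at hs
    rcases ht with _ | ⟨g, t', _, -, ht'⟩
    obtain ⟨w₁, w₂, rfl, hw₁, hw₂⟩ := h₃.exists_append_of_sizes_append g
    obtain ⟨L₁, hL₁, hL₂, hL₃⟩ := exists_blocks_of_hasBlockSizes_one_two hw₁
    obtain ⟨L₂, hM₁, hM₂, hM₃⟩ := ih _ hVlen hVmem h₁ hs hw₂ ht' rfl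
    exact ⟨L₁ ++ L₂, by simp [hL₁, hL₂, hL₃, hM₁, hM₂, hM₃]⟩
  · rw [expSeq_replicate_append hk hV] at hs
    rw [expSeq_replicate_append_of_ne (by decide)] at ht
    rcases hs with _ | ⟨g, s', _, -, hs'⟩
    obtain ⟨w₁, w₂, rfl, hw₁, hw₂⟩ := h₁.exists_append_of_sizes_append g
    obtain ⟨L₁, hL₁, hL₂, hL₃⟩ := exists_blocks_of_hasBlockSizes_two_three hw₁
    obtain ⟨L₂, hM₁, hM₂, hM₃⟩ := ih _ hVlen hVmem hw₂ hs' h₃ ht rfl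
    exact ⟨L₁ ++ L₂, by simp [hL₁, hL₂, hL₃, hM₁, hM₂, hM₃]⟩

lemma exists_phiTab_three_eq {U : ℕ → List ℕ} (hU : IsTableau {1, 2, 3} U)
    (h₁ : ∃ s, HasBlockSizes 2 3 (U 1) s ∧ Refines s (expSeq 3 (U 2)))
    (h₃ : ∃ t, HasBlockSizes 1 2 (U 3) t ∧ Refines t (expSeq 1 (U 2))) :
    ∃ L, phiTab 3 L = U := by
  obtain ⟨s, hs, hs'⟩ := h₁
  obtain ⟨t, ht, ht'⟩ := h₃
  obtain ⟨L, hL₁, hL₂, hL₃⟩ := exists_blocks hU.forall_mem_three.2.1 hs hs' ht ht'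
  refine ⟨L, funext fun i => ?_⟩
  by_cases hi : i ∈ ({1, 2, 3} : Finset ℕ)
  · simp only [Finset.mem_insert, Finset.mem_singleton] at hi
    rw [phiTab, if_pos (by omega), ← List.flatMap_def]
    rcases hi with rfl | rfl | rfl <;> assumption
  · rw [phiTab, if_neg (by simp at hi; omega), hU.2 i hi]

/-- **Proposition.** For `n ≥ 4` and a tableau `U` on `{1,2,3}`, there is a regular
tableau `T` on `[n]` with `T_{1,2,3} = U` iff rows `U 1` and `U 3` are balanced, the
block sizes of `U 1` refine the exponent sequence of `3` in `U 2`, and the block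
sizes of `U 3` refine the exponent sequence of `1` in `U 2`. -/
theorem exists_regularTableau_iff (n : ℕ) (hn : 4 ≤ n) (U : ℕ → List ℕ)
    (hU : IsTableau ({1, 2, 3} : Finset ℕ) U) :
    (∃ T : ℕ → List ℕ, IsRegularTableau (Finset.Icc 1 n) T ∧
        restrictTab {1, 2, 3} T = U) ↔
      (BalancedOn 2 3 (U 1) ∧ BalancedOn 1 2 (U 3) ∧
       (∃ s : List ℕ, HasBlockSizes 2 3 (U 1) s ∧ Refines s (expSeq 3 (U 2))) ∧
       (∃ s : List ℕ, HasBlockSizes 1 2 (U 3) s ∧ Refines s (expSeq 1 (U 2)))) := by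
  constructor
  · rintro ⟨T, hT, rfl⟩
    obtain ⟨⟨s, hs, hs'⟩, ⟨t, ht, ht'⟩⟩ := hT.exists_refines_restrictTab hn
    exact ⟨hs.balancedOn, ht.balancedOn, ⟨s, hs, hs'⟩, ⟨t, ht, ht'⟩⟩
  · rintro ⟨-, -, h₁, h₃⟩
    obtain ⟨L, rfl⟩ := exists_phiTab_three_eq hU h₁ h₃
    exact ⟨phiTab n L, isRegularTableau_phiTab hn L, restrictTab_phiTab_three (by omega) L⟩

end
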